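/- For all Schwartz functions f₁,f₂,f₃,f₄ on ℝ, ∫_ℝ C^{1,1,−2}(f₁,f₂,f₄)(x) · f₃(x) dx = ∫_ℝ [ C^{1,1}(f₁,f₂)(x)·f₃(x) − C^{1,1}(f₁,f₂)(x)·H⁻f₃(x) − W(x) ] · f₄(x) dx, where W(x) = ∫_{{(ξ₁,ξ₂,ξ₃)∈ℝ³ : ξ₁+ξ₃<ξ₂ and 0<ξ₃}} f̂₁(ξ₁) f̂₂(ξ₂) f̂₃(ξ₃) e^{2πix(ξ₁+ξ₂+ξ₃)} dξ (the frequency-side expression of C^{1,1}(f₁·H⁺(f₃), f₂)(x)). -/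

import Mathlib

open MeasureTheory

/-- The trilinear semi-degenerate simplex multiplier `C^{1,1,-2}`. -/
noncomputable def C112 (f₁ f₂ f₃ : SchwartzMap ℝ ℂ) (x : ℝ) : ℂ :=
  ∫ ξ in {p : ℝ × ℝ × ℝ | p.1 < p.2.1 ∧ p.2.1 < -p.2.2 / 2},
    FourierTransform.fourier (⇑f₁) ξ.1 * FourierTransform.fourier (⇑f₂) ξ.2.1 *
      FourierTransform.fourier (⇑f₃) ξ.2.2 *
      Complex.exp ((2 : ℂ) * (Real.pi : ℂ) * Complex.I * (x : ℂ) *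
        ((ξ.1 : ℂ) + (ξ.2.1 : ℂ) + (ξ.2.2 : ℂ)))

/-- The bilinear simplex multiplier `C^{1,1}`. -/
noncomputable def C11 (f₁ f₂ : SchwartzMap ℝ ℂ) (x : ℝ) : ℂ :=
  ∫ ξ in {p : ℝ × ℝ | p.1 < p.2},
    FourierTransform.fourier (⇑f₁) ξ.1 * FourierTransform.fourier (⇑f₂) ξ.2 *
      Complex.exp ((2 : ℂ) * (Real.pi : ℂ) * Complex.I * (x : ℂ) *
        ((ξ.1 : ℂ) + (ξ.2 : ℂ)))

/-- `H⁻f(x) = ∫_{ξ ≤ 0} f̂(ξ) e^{2πixξ} dξ`. -/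
noncomputable def Hminus (f : SchwartzMap ℝ ℂ) (x : ℝ) : ℂ :=
  ∫ ξ in {ξ : ℝ | ξ ≤ 0},
    FourierTransform.fourier (⇑f) ξ *
      Complex.exp ((2 : ℂ) * (Real.pi : ℂ) * Complex.I * (x : ℂ) * (ξ : ℂ))

/-- The frequency-side expression of `C^{1,1}(f₁·H⁺(f₃), f₂)(x)`. -/
noncomputable def Wterm (f₁ f₂ f₃ : SchwartzMap ℝ ℂ) (x : ℝ) : ℂ :=
  ∫ ξ in {p : ℝ × ℝ × ℝ | p.1 + p.2.2 < p.2.1 ∧ 0 < p.2.2},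
    FourierTransform.fourier (⇑f₁) ξ.1 * FourierTransform.fourier (⇑f₂) ξ.2.1 *
      FourierTransform.fourier (⇑f₃) ξ.2.2 *
      Complex.exp ((2 : ℂ) * (Real.pi : ℂ) * Complex.I * (x : ℂ) *
        ((ξ.1 : ℂ) + (ξ.2.1 : ℂ) + (ξ.2.2 : ℂ)))

/-!
Everything is computed on the frequency side. By Fubini, pairing a frequency integral
`∫_S ĝ₁(ξ₁) ĝ₂(ξ₂) ĝ₃(ξ₃) e^{2πix(ξ₁+ξ₂+ξ₃)} dξ` against `h` gives
`∫_S ĝ₁(ξ₁) ĝ₂(ξ₂) ĝ₃(ξ₃) ĥ(-(ξ₁+ξ₂+ξ₃)) dξ`. On the right, `f₃ - H⁻f₃ = H⁺f₃`, so the bracket is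
the frequency integral over `{ξ₁ < ξ₂, 0 < ξ₃} \ {ξ₁ + ξ₃ < ξ₂, 0 < ξ₃}`. On the left, the
measure-preserving substitution `ξ₃ ↦ -(ξ₁+ξ₂+ξ₃)` exchanges the roles of `f̂₃` and `f̂₄` and maps
`{ξ₁ < ξ₂ < -ξ₃/2}` to `{ξ₁ < ξ₂ < ξ₁ + ξ₃}`, which differs from that region only by the null
plane `ξ₂ = ξ₁ + ξ₃`.
-/

open Real Set
open scoped FourierTransform SchwartzMap

lemma cexp_two_pi_I_mul_eq_fourierChar (x t : ℝ) :
    Complex.exp (2 * π * Complex.I * x * t) = 𝐞 (x * t) := by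
  rw [Real.fourierChar_apply]
  push_cast
  ring_nf

lemma integral_fourierChar_mul (h : ℝ → ℂ) (t : ℝ) :
    ∫ x : ℝ, 𝐞 (x * t) * h x = 𝓕 h (-t) := by
  simp [Real.fourier_real_eq, Circle.smul_def]

lemma SchwartzMap.eq_integral_fourier_mul_fourierChar (f : 𝓢(ℝ, ℂ)) (x : ℝ) :
    f x = ∫ t : ℝ, 𝓕 (⇑f) t * 𝐞 (x * t) := by
  conv_lhs => rw [← f.continuous.fourierInv_fourier_eq f.integrable (𝓕 f).integrable]
  simp [Real.fourierInv_eq, Circle.smul_def, mul_comm]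

section Products

variable {α β γ : Type*} [MeasurableSpace α] [MeasurableSpace β] [MeasurableSpace γ]
  {μ : Measure α} {ν : Measure β} {ρ : Measure γ}

lemma MeasureTheory.Integrable.mul_fourierChar {F : α → ℂ} (hF : Integrable F μ) {φ : α → ℝ}
    (hφ : Measurable φ) : Integrable (fun ξ ↦ F ξ * 𝐞 (φ ξ)) μ :=
  hF.mul_bdd ((continuous_subtype_val.comp Real.continuous_fourierChar).measurable.comp
    hφ).aestronglyMeasurable (c := 1) (ae_of_all _ fun _ ↦ (Circle.norm_coe _).le)

lemma integral_integral_fourierChar_mul [SFinite μ] {F : α → ℂ} (hF : Integrable F μ)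
    {φ : α → ℝ} (hφ : Measurable φ) {h : ℝ → ℂ} (hh : Integrable h) :
    ∫ x : ℝ, (∫ ξ, F ξ * 𝐞 (x * φ ξ) ∂μ) * h x = ∫ ξ, F ξ * 𝓕 h (-φ ξ) ∂μ := by
  have hint : Integrable (Function.uncurry fun x ξ ↦ F ξ * (𝐞 (x * φ ξ) * h x))
      (volume.prod μ) := by
    refine ((hh.mul_prod hF).mul_fourierChar (φ := fun p ↦ p.1 * φ p.2)
      (by fun_prop)).congr (ae_of_all _ fun p ↦ ?_)
    simp only [Function.uncurry]
    ring
  calc ∫ x : ℝ, (∫ ξ, F ξ * 𝐞 (x * φ ξ) ∂μ) * h x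
      = ∫ x : ℝ, ∫ ξ, F ξ * (𝐞 (x * φ ξ) * h x) ∂μ := by
        simp_rw [← integral_mul_const, mul_assoc]
    _ = ∫ ξ, (∫ x : ℝ, F ξ * (𝐞 (x * φ ξ) * h x)) ∂μ := integral_integral_swap hint
    _ = ∫ ξ, F ξ * 𝓕 h (-φ ξ) ∂μ := by simp_rw [integral_const_mul, integral_fourierChar_mul]

lemma MeasureTheory.Integrable.mul_prod₃ [SFinite ν] [SFinite ρ] {f : α → ℂ} {g : β → ℂ}
    {h : γ → ℂ} (hf : Integrable f μ) (hg : Integrable g ν) (hh : Integrable h ρ) :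
    Integrable (fun ξ : α × β × γ ↦ f ξ.1 * g ξ.2.1 * h ξ.2.2) (μ.prod (ν.prod ρ)) := by
  simpa only [mul_assoc] using hf.mul_prod (hg.mul_prod hh)

lemma setIntegral_mul_setIntegral_eq_setIntegral_prod₃ [SFinite μ] [SFinite ν] [SFinite ρ]
    (f : α × β → ℂ) (g : γ → ℂ) (s : Set (α × β)) (t : Set γ) :
    (∫ p in s, f p ∂μ.prod ν) * (∫ c in t, g c ∂ρ) =
      ∫ ξ in {ξ : α × β × γ | (ξ.1, ξ.2.1) ∈ s ∧ ξ.2.2 ∈ t},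
        f (ξ.1, ξ.2.1) * g ξ.2.2 ∂μ.prod (ν.prod ρ) := by
  rw [← setIntegral_prod_mul, ← (measurePreserving_prodAssoc μ ν ρ).setIntegral_preimage_emb
    MeasurableEquiv.prodAssoc.measurableEmbedding]
  rfl

lemma measure_prod_setOf_fst_eq [SFinite ν] {g : β → ℝ} (hg : Measurable g) :
    (volume.prod ν) {p : ℝ × β | p.1 = g p.2} = 0 := by
  rw [Measure.prod_apply_symm (measurableSet_eq_fun measurable_fst (hg.comp measurable_snd) :
    MeasurableSet {p : ℝ × β | p.1 = g p.2})]
  simp [Set.preimage]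

end Products

noncomputable def negSumThird : (ℝ × ℝ × ℝ) ≃ᵐ (ℝ × ℝ × ℝ) :=
  MeasurableEquiv.ofInvolutive (fun ξ ↦ (ξ.1, ξ.2.1, -(ξ.1 + ξ.2.1 + ξ.2.2)))
    (fun ξ ↦ by ext <;> simp; ring) (by fun_prop)

lemma negSumThird_apply (ξ : ℝ × ℝ × ℝ) :
    negSumThird ξ = (ξ.1, ξ.2.1, -(ξ.1 + ξ.2.1 + ξ.2.2)) :=
  rfl

lemma measurePreserving_negSumThird : MeasurePreserving negSumThird := by
  have hneg (t : ℝ) : Measure.map (fun c : ℝ ↦ -(t + c)) volume = volume := by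
    rw [show (fun c : ℝ ↦ -(t + c)) = fun c ↦ -t - c by ext; ring]
    exact (Measure.measurePreserving_sub_left volume (-t)).map_eq
  refine (MeasurePreserving.id volume).skew_product
    (g := fun a (q : ℝ × ℝ) ↦ (q.1, -(a + q.1 + q.2))) (by fun_prop) (ae_of_all _ fun a ↦ ?_)
  exact ((MeasurePreserving.id volume).skew_product (g := fun b c ↦ -(a + b + c))
    (by fun_prop) (ae_of_all _ fun b ↦ by simpa only [add_assoc] using hneg (a + b))).map_eq

lemma setIntegral_region_negSumThird (g₁ g₂ g₃ g₄ : ℝ → ℂ) :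
    ∫ ξ in {ξ : ℝ × ℝ × ℝ | ξ.1 < ξ.2.1 ∧ ξ.2.1 < -ξ.2.2 / 2},
        g₁ ξ.1 * g₂ ξ.2.1 * g₃ ξ.2.2 * g₄ (-(ξ.1 + ξ.2.1 + ξ.2.2)) =
      ∫ ξ in {ξ : ℝ × ℝ × ℝ | ξ.1 < ξ.2.1 ∧ ξ.2.1 < ξ.1 + ξ.2.2},
        g₁ ξ.1 * g₂ ξ.2.1 * g₄ ξ.2.2 * g₃ (-(ξ.1 + ξ.2.1 + ξ.2.2)) := by
  have hpre : negSumThird ⁻¹' {ξ : ℝ × ℝ × ℝ | ξ.1 < ξ.2.1 ∧ ξ.2.1 < -ξ.2.2 / 2} =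
      {ξ | ξ.1 < ξ.2.1 ∧ ξ.2.1 < ξ.1 + ξ.2.2} := by
    ext ξ
    simp only [Set.mem_preimage, negSumThird_apply, Set.mem_ofPred_eq]
    constructor <;> rintro ⟨h₁, h₂⟩ <;> exact ⟨h₁, by linarith⟩
  rw [← measurePreserving_negSumThird.setIntegral_preimage_emb
    negSumThird.measurableEmbedding, hpre]
  refine integral_congr_ae (ae_of_all _ fun ξ ↦ ?_)
  simp only [negSumThird_apply]
  ring_nf

lemma ae_eq_region_sdiff :
    {ξ : ℝ × ℝ × ℝ | ξ.1 < ξ.2.1 ∧ ξ.2.1 < ξ.1 + ξ.2.2} =ᵐ[volume]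
      {ξ : ℝ × ℝ × ℝ | ξ.1 < ξ.2.1 ∧ 0 < ξ.2.2} \ {ξ | ξ.1 + ξ.2.2 < ξ.2.1 ∧ 0 < ξ.2.2} := by
  have hplane := measure_eq_zero_iff_ae_notMem.1
    (measure_prod_setOf_fst_eq (ν := volume) (g := fun q : ℝ × ℝ ↦ q.1 - q.2) (by fun_prop))
  refine Filter.eventuallyEq_set.2 (hplane.mono fun ξ hξ ↦ ?_)
  simp only [Set.mem_ofPred_eq] at hξ ⊢
  constructor
  · rintro ⟨h₁, h₂⟩
    exact ⟨⟨h₁, by linarith⟩, fun h ↦ by linarith [h.1]⟩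
  · rintro ⟨⟨h₁, h₂⟩, h₃⟩
    refine ⟨h₁, lt_of_le_of_ne (not_lt.1 fun h ↦ h₃ ⟨h, h₂⟩) fun h ↦ hξ ?_⟩
    linarith

noncomputable def freqIntegral (S : Set (ℝ × ℝ × ℝ)) (g₁ g₂ g₃ : ℝ → ℂ) (x : ℝ) : ℂ :=
  ∫ ξ in S, g₁ ξ.1 * g₂ ξ.2.1 * g₃ ξ.2.2 * 𝐞 (x * (ξ.1 + ξ.2.1 + ξ.2.2))

section freqIntegral

variable {g₁ g₂ g₃ : ℝ → ℂ}

lemma integral_freqIntegral_mul (hg₁ : Integrable g₁) (hg₂ : Integrable g₂)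
    (hg₃ : Integrable g₃) (S : Set (ℝ × ℝ × ℝ)) {h : ℝ → ℂ} (hh : Integrable h) :
    ∫ x, freqIntegral S g₁ g₂ g₃ x * h x =
      ∫ ξ in S, g₁ ξ.1 * g₂ ξ.2.1 * g₃ ξ.2.2 * 𝓕 h (-(ξ.1 + ξ.2.1 + ξ.2.2)) :=
  integral_integral_fourierChar_mul (hg₁.mul_prod₃ hg₂ hg₃).integrableOn (by fun_prop) hh

lemma freqIntegral_sdiff (hg₁ : Integrable g₁) (hg₂ : Integrable g₂) (hg₃ : Integrable g₃)
    {S T : Set (ℝ × ℝ × ℝ)} (hT : MeasurableSet T) (hTS : T ⊆ S) (x : ℝ) :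
    freqIntegral (S \ T) g₁ g₂ g₃ x = freqIntegral S g₁ g₂ g₃ x - freqIntegral T g₁ g₂ g₃ x :=
  setIntegral_sdiff hT ((hg₁.mul_prod₃ hg₂ hg₃).mul_fourierChar (by fun_prop)).integrableOn hTS

end freqIntegral

lemma C112_eq_freqIntegral (f₁ f₂ f₃ : 𝓢(ℝ, ℂ)) :
    C112 f₁ f₂ f₃ =
      freqIntegral {ξ | ξ.1 < ξ.2.1 ∧ ξ.2.1 < -ξ.2.2 / 2} (𝓕 ⇑f₁) (𝓕 ⇑f₂) (𝓕 ⇑f₃) := by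
  ext x
  simp only [C112, freqIntegral, ← Complex.ofReal_add, cexp_two_pi_I_mul_eq_fourierChar]

lemma Wterm_eq_freqIntegral (f₁ f₂ f₃ : 𝓢(ℝ, ℂ)) :
    Wterm f₁ f₂ f₃ =
      freqIntegral {ξ | ξ.1 + ξ.2.2 < ξ.2.1 ∧ 0 < ξ.2.2} (𝓕 ⇑f₁) (𝓕 ⇑f₂) (𝓕 ⇑f₃) := by
  ext x
  simp only [Wterm, freqIntegral, ← Complex.ofReal_add, cexp_two_pi_I_mul_eq_fourierChar]

lemma sub_Hminus_eq (f : 𝓢(ℝ, ℂ)) (x : ℝ) :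
    f x - Hminus f x = ∫ t in Ioi 0, 𝓕 (⇑f) t * 𝐞 (x * t) := by
  have hint : Integrable fun t ↦ 𝓕 (⇑f) t * 𝐞 (x * t) :=
    ((𝓕 f).integrable (μ := volume)).mul_fourierChar (φ := fun t ↦ x * t) (by fun_prop)
  rw [f.eq_integral_fourier_mul_fourierChar x, ← integral_add_compl measurableSet_Iic hint,
    compl_Iic]
  simp only [Hminus, cexp_two_pi_I_mul_eq_fourierChar]
  exact add_sub_cancel_left _ _

lemma C11_mul_sub_Hminus (f₁ f₂ f₃ : 𝓢(ℝ, ℂ)) (x : ℝ) :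
    C11 f₁ f₂ x * (f₃ x - Hminus f₃ x) =
      freqIntegral {ξ | ξ.1 < ξ.2.1 ∧ 0 < ξ.2.2} (𝓕 ⇑f₁) (𝓕 ⇑f₂) (𝓕 ⇑f₃) x := by
  simp only [C11, sub_Hminus_eq, ← Complex.ofReal_add, cexp_two_pi_I_mul_eq_fourierChar]
  rw [Measure.volume_eq_prod, setIntegral_mul_setIntegral_eq_setIntegral_prod₃]
  refine integral_congr_ae (ae_of_all _ fun ξ ↦ ?_)
  simp only [mul_add, AddChar.map_add_eq_mul, Circle.coe_mul]
  ring

/-- The 3-adjoint identity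
`∫ C^{1,1,−2}(f₁,f₂,f₄)·f₃ = ∫ [C^{1,1}(f₁,f₂)·f₃ − C^{1,1}(f₁,f₂)·H⁻f₃ − C^{1,1}(f₁·H⁺f₃,f₂)]·f₄`. -/
theorem C112_third_adjoint (f₁ f₂ f₃ f₄ : SchwartzMap ℝ ℂ) :
    (∫ x : ℝ, C112 f₁ f₂ f₄ x * f₃ x) =
      ∫ x : ℝ,
        (C11 f₁ f₂ x * f₃ x - C11 f₁ f₂ x * Hminus f₃ x - Wterm f₁ f₂ f₃ x) * f₄ x := by
  have hF (f : 𝓢(ℝ, ℂ)) : Integrable (𝓕 ⇑f) := (𝓕 f).integrable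
  have hW : MeasurableSet {ξ : ℝ × ℝ × ℝ | ξ.1 + ξ.2.2 < ξ.2.1 ∧ 0 < ξ.2.2} := by
    measurability
  have hWsub : {ξ : ℝ × ℝ × ℝ | ξ.1 + ξ.2.2 < ξ.2.1 ∧ 0 < ξ.2.2} ⊆
      {ξ | ξ.1 < ξ.2.1 ∧ 0 < ξ.2.2} :=
    fun ξ h ↦ ⟨by linarith [h.1, h.2], h.2⟩
  calc ∫ x, C112 f₁ f₂ f₄ x * f₃ x
      = ∫ ξ in {ξ : ℝ × ℝ × ℝ | ξ.1 < ξ.2.1 ∧ ξ.2.1 < -ξ.2.2 / 2},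
          𝓕 (⇑f₁) ξ.1 * 𝓕 (⇑f₂) ξ.2.1 * 𝓕 (⇑f₄) ξ.2.2 * 𝓕 (⇑f₃) (-(ξ.1 + ξ.2.1 + ξ.2.2)) := by
        rw [C112_eq_freqIntegral,
          integral_freqIntegral_mul (hF f₁) (hF f₂) (hF f₄) _ f₃.integrable]
    _ = ∫ ξ in {ξ : ℝ × ℝ × ℝ | ξ.1 < ξ.2.1 ∧ ξ.2.1 < ξ.1 + ξ.2.2},
          𝓕 (⇑f₁) ξ.1 * 𝓕 (⇑f₂) ξ.2.1 * 𝓕 (⇑f₃) ξ.2.2 * 𝓕 (⇑f₄) (-(ξ.1 + ξ.2.1 + ξ.2.2)) :=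
        setIntegral_region_negSumThird _ _ _ _
    _ = ∫ ξ in {ξ : ℝ × ℝ × ℝ | ξ.1 < ξ.2.1 ∧ 0 < ξ.2.2} \ {ξ | ξ.1 + ξ.2.2 < ξ.2.1 ∧ 0 < ξ.2.2},
          𝓕 (⇑f₁) ξ.1 * 𝓕 (⇑f₂) ξ.2.1 * 𝓕 (⇑f₃) ξ.2.2 * 𝓕 (⇑f₄) (-(ξ.1 + ξ.2.1 + ξ.2.2)) :=
        setIntegral_congr_set ae_eq_region_sdiff
    _ = _ := by
        rw [← integral_freqIntegral_mul (hF f₁) (hF f₂) (hF f₃) _ f₄.integrable]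
        congr 1 with x
        rw [freqIntegral_sdiff (hF f₁) (hF f₂) (hF f₃) hW hWsub, ← C11_mul_sub_Hminus,
          ← Wterm_eq_freqIntegral]
        ring
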